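/- Let N ≥ 8 be even. The graph state |G₁⟩ of the graph with edges {{i,i+N/2−1},{i,i+N/2} : i ∈ Z/NZ} is a zero-energy eigenstate of the Hamiltonian Ĥ = J Σ_i (σ_i^z σ_{i+3}^z − σ_i^x σ_{i+1}^x): for each i the operator σ_i^x σ_{i+1}^x σ_{i+N/2−1}^z σ_{i+N/2+2}^z stabilizes |G₁⟩, hence (σ_{i+N/2−1}^z σ_{i+N/2+2}^z − σ_i^x σ_{i+1}^x)|G₁⟩ = 0, and summing over i gives Ĥ|G₁⟩ = 0. -/
import Mathlib


open Matrix Complex BigOperators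
open scoped Classical

noncomputable section

/-- Single-qubit Pauli matrices: I, X, Y, Z. -/
def pauli1 : Fin 4 → Matrix (Fin 2) (Fin 2) ℂ
  | 0 => 1
  | 1 => !![0, 1; 1, 0]
  | 2 => !![0, -Complex.I; Complex.I, 0]
  | 3 => !![1, 0; 0, -1]

/-- Operators on an N-qubit system with sites indexed by `V`. -/
abbrev QOp (V : Type*) := Matrix (V → Fin 2) (V → Fin 2) ℂ

/-- The prefactor-1 Pauli string with single-site labels `p`. -/
def pauliOp {V : Type*} [Fintype V] (p : V → Fin 4) : QOp V :=
  Matrix.of fun x y => ∏ i, pauli1 (p i) (x i) (y i)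

/-- Support of a Pauli string: sites where the tensor factor is not the identity. -/
def psupp {V : Type*} [Fintype V] (p : V → Fin 4) : Finset V :=
  Finset.univ.filter fun i => p i ≠ 0

/-- Allowed phases of Pauli group elements. -/
def isPhase (a : ℂ) : Prop := a = 1 ∨ a = -1 ∨ a = Complex.I ∨ a = -Complex.I

/-- A maximal stabilizer group on qubits indexed by `V`: an abelian set of
prefactor-`±1` Pauli strings, closed under multiplication, containing `I`,
not containing `-I`, of cardinality `2 ^ |V|`. -/
structure MaxStabilizer (V : Type*) [Fintype V] [DecidableEq V] where
  carrier : Finset (QOp V)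
  mem_pauli : ∀ g ∈ carrier, ∃ (c : ℂ) (p : V → Fin 4), (c = 1 ∨ c = -1) ∧ g = c • pauliOp p
  one_mem : (1 : QOp V) ∈ carrier
  mul_mem : ∀ g ∈ carrier, ∀ h ∈ carrier, g * h ∈ carrier
  mul_comm' : ∀ g ∈ carrier, ∀ h ∈ carrier, g * h = h * g
  neg_one_not_mem : (-1 : QOp V) ∉ carrier
  card_eq : carrier.card = 2 ^ Fintype.card V

/-- `ψ` is the stabilizer state of `G`: a normalized common `+1`-eigenvector of all
elements of `G`. -/
def IsStabState {V : Type*} [Fintype V] [DecidableEq V] (G : MaxStabilizer V)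
    (ψ : (V → Fin 2) → ℂ) : Prop :=
  (∀ g ∈ G.carrier, Matrix.mulVec g ψ = ψ) ∧ ∑ x, starRingEnd ℂ (ψ x) * ψ x = 1

/-- The projector `|ψ⟩⟨ψ|` onto a state `ψ`. -/
def projOf {V : Type*} (ψ : (V → Fin 2) → ℂ) : QOp V :=
  Matrix.vecMulVec ψ fun x => starRingEnd ℂ (ψ x)

/-- Reduced density matrix (partial trace over the complement of `A`). -/
def reduced {V : Type*} [Fintype V] [DecidableEq V] (ρ : QOp V) (A : Finset V) :
    Matrix ({i // i ∈ A} → Fin 2) ({i // i ∈ A} → Fin 2) ℂ :=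
  Matrix.of fun a b => ∑ c : {i // i ∉ A} → Fin 2,
    ρ (fun i => if h : i ∈ A then a ⟨i, h⟩ else c ⟨i, h⟩)
      (fun i => if h : i ∈ A then b ⟨i, h⟩ else c ⟨i, h⟩)

/-- `δ(G)`: minimum support size over nonidentity elements of `G`. -/
def sdelta {V : Type*} [Fintype V] [DecidableEq V] (G : MaxStabilizer V) : ℕ :=
  sInf {k | ∃ (c : ℂ) (p : V → Fin 4), (c = 1 ∨ c = -1) ∧ c • pauliOp p ∈ G.carrier ∧
    c • pauliOp p ≠ 1 ∧ (psupp p).card = k}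

/-- The graph `G₁` on `ZMod N` with edges `{i, i+N/2-1}` and `{i, i+N/2}`. -/
def G1 (N : ℕ) : SimpleGraph (ZMod N) :=
  SimpleGraph.fromRel fun i j => j = i + ((N / 2 : ℕ) : ZMod N) - 1 ∨ j = i + ((N / 2 : ℕ) : ZMod N)

/-- The graph `G₂` on `ZMod N` with edges `{i, i+(N-1)/2}`. -/
def G2 (N : ℕ) : SimpleGraph (ZMod N) :=
  SimpleGraph.fromRel fun i j => j = i + (((N - 1) / 2 : ℕ) : ZMod N)

/-- The `N`-cycle on `ZMod N`, with edges `{i, i+1}`. -/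
def CycZ (N : ℕ) : SimpleGraph (ZMod N) :=
  SimpleGraph.fromRel fun i j => j = i + 1

/-- Label string of the graph-state stabilizer generator `K_i = X_i ∏_{j ~ i} Z_j`. -/
def Klabel {V : Type*} [DecidableEq V] (G : SimpleGraph V) (i : V) : V → Fin 4 :=
  fun j => if j = i then 1 else if G.Adj i j then 3 else 0

/-- Label string of `σᶻ_i σᶻ_{i+3}`. -/
def zzLabel (N : ℕ) (i : ZMod N) : ZMod N → Fin 4 :=
  fun j => if j = i ∨ j = i + 3 then 3 else 0

/-- Label string of `σˣ_i σˣ_{i+1}`. -/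
def xxLabel (N : ℕ) (i : ZMod N) : ZMod N → Fin 4 :=
  fun j => if j = i ∨ j = i + 1 then 1 else 0

/-- Label string of `σᶻ_{i+N/2-1} σᶻ_{i+N/2+2}`. -/
def zpairLabel (N : ℕ) (i : ZMod N) : ZMod N → Fin 4 :=
  fun j => if j = i + ((N / 2 : ℕ) : ZMod N) - 1 ∨ j = i + ((N / 2 : ℕ) : ZMod N) + 2
    then 3 else 0

/-- Label string of `σˣ_i σˣ_{i+1} σᶻ_{i+N/2-1} σᶻ_{i+N/2+2}`. -/
def sLabel (N : ℕ) (i : ZMod N) : ZMod N → Fin 4 :=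
  fun j => if j = i ∨ j = i + 1 then 1
    else if j = i + ((N / 2 : ℕ) : ZMod N) - 1 ∨ j = i + ((N / 2 : ℕ) : ZMod N) + 2
      then 3 else 0

lemma pauli1_zero : pauli1 0 = 1 := rfl

lemma pauli1_ZZ : pauli1 3 * pauli1 3 = pauli1 0 := by
  ext a b; fin_cases a <;> fin_cases b <;>
    simp [pauli1, Matrix.mul_apply, Fin.sum_univ_two, Matrix.one_apply]

lemma G1_adj {N : ℕ} (hh : ((N / 2 : ℕ) : ZMod N) + ((N / 2 : ℕ) : ZMod N) = 0) (i j : ZMod N) :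
    (G1 N).Adj i j ↔ j ≠ i ∧ (j = i + ((N / 2 : ℕ) : ZMod N) - 1 ∨ j = i + ((N / 2 : ℕ) : ZMod N)
      ∨ j = i + ((N / 2 : ℕ) : ZMod N) + 1) := by
  rw [G1, SimpleGraph.fromRel_adj]
  constructor
  · rintro ⟨hne, (h1 | h1) | (h1 | h1)⟩
    · exact ⟨Ne.symm hne, Or.inl h1⟩
    · exact ⟨Ne.symm hne, Or.inr (Or.inl h1)⟩
    · exact ⟨Ne.symm hne, Or.inr (Or.inr (by linear_combination -h1 - hh))⟩
    · exact ⟨Ne.symm hne, Or.inr (Or.inl (by linear_combination -h1 - hh))⟩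
  · rintro ⟨hne, h1 | h1 | h1⟩
    · exact ⟨Ne.symm hne, Or.inl (Or.inl h1)⟩
    · exact ⟨Ne.symm hne, Or.inl (Or.inr h1)⟩
    · exact ⟨Ne.symm hne, Or.inr (Or.inl (by linear_combination -h1 - hh))⟩

lemma K_eval {N : ℕ} (hh : ((N / 2 : ℕ) : ZMod N) + ((N / 2 : ℕ) : ZMod N) = 0) (v j : ZMod N) :
    Klabel (G1 N) v j = if j = v then 1
      else if j = v + ((N / 2 : ℕ) : ZMod N) - 1 ∨ j = v + ((N / 2 : ℕ) : ZMod N)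
        ∨ j = v + ((N / 2 : ℕ) : ZMod N) + 1 then 3 else 0 := by
  unfold Klabel
  by_cases hj : j = v
  · simp [hj]
  · rw [if_neg hj, if_neg hj]
    by_cases ha : (G1 N).Adj v j
    · rw [if_pos ha, if_pos ((G1_adj hh v j).mp ha).2]
    · rw [if_neg ha, if_neg fun hcon => ha ((G1_adj hh v j).mpr ⟨hj, hcon⟩)]

lemma key1 {N : ℕ}
    (hh : ((N / 2 : ℕ) : ZMod N) + ((N / 2 : ℕ) : ZMod N) = 0)
    (f1 : (1 : ZMod N) ≠ 0) (f2 : (2 : ZMod N) ≠ 0) (f3 : (3 : ZMod N) ≠ 0)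
    (g0 : ((N / 2 : ℕ) : ZMod N) ≠ 0) (g1 : ((N / 2 : ℕ) : ZMod N) ≠ 1)
    (g2 : ((N / 2 : ℕ) : ZMod N) ≠ 2)
    (g1' : ((N / 2 : ℕ) : ZMod N) + 1 ≠ 0) (g2' : ((N / 2 : ℕ) : ZMod N) + 2 ≠ 0)
    (i j : ZMod N) :
    pauli1 (Klabel (G1 N) i j) * pauli1 (Klabel (G1 N) (i + 1) j) = pauli1 (sLabel N i j) := by
  rw [K_eval hh i j, K_eval hh (i + 1) j]
  unfold sLabel
  set d := ((N / 2 : ℕ) : ZMod N) with hd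
  by_cases e0 : j = i
  · rw [if_pos e0, if_neg (show ¬ j = i + 1 from fun hc => f1 (by linear_combination e0 - hc)),
      if_neg (show ¬(j = i + 1 + d - 1 ∨ j = i + 1 + d ∨ j = i + 1 + d + 1) by
        rintro (hc | hc | hc)
        exacts [g0 (by linear_combination e0 - hc), g1' (by linear_combination e0 - hc),
          g2' (by linear_combination e0 - hc)]),
      if_pos (Or.inl e0), pauli1_zero, mul_one]
  by_cases e1 : j = i + 1
  · rw [if_neg e0,
      if_neg (show ¬(j = i + d - 1 ∨ j = i + d ∨ j = i + d + 1) by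
        rintro (hc | hc | hc)
        exacts [g2 (by linear_combination e1 - hc), g1 (by linear_combination e1 - hc),
          g0 (by linear_combination e1 - hc)]),
      if_pos e1, if_pos (Or.inr e1), pauli1_zero, one_mul]
  have nS1 : ¬(j = i ∨ j = i + 1) := fun hc => hc.elim e0 e1
  by_cases eA : j = i + d - 1
  · rw [if_neg e0, if_pos (Or.inl eA), if_neg e1,
      if_neg (show ¬(j = i + 1 + d - 1 ∨ j = i + 1 + d ∨ j = i + 1 + d + 1) by
        rintro (hc | hc | hc)
        exacts [f1 (by linear_combination eA - hc), f2 (by linear_combination eA - hc),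
          f3 (by linear_combination eA - hc)]),
      if_neg nS1, if_pos (Or.inl eA), pauli1_zero, mul_one]
  by_cases eB : j = i + d
  · rw [if_neg e0, if_pos (Or.inr (Or.inl eB)), if_neg e1,
      if_pos (Or.inl (show j = i + 1 + d - 1 by linear_combination eB)),
      if_neg nS1,
      if_neg (show ¬(j = i + d - 1 ∨ j = i + d + 2) by
        rintro (hc | hc)
        exacts [f1 (by linear_combination hc - eB), f2 (by linear_combination eB - hc)])]
    exact pauli1_ZZ
  by_cases eC : j = i + d + 1
  · rw [if_neg e0, if_pos (Or.inr (Or.inr eC)), if_neg e1,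
      if_pos (Or.inr (Or.inl (show j = i + 1 + d by linear_combination eC))),
      if_neg nS1,
      if_neg (show ¬(j = i + d - 1 ∨ j = i + d + 2) by
        rintro (hc | hc)
        exacts [f2 (by linear_combination hc - eC), f1 (by linear_combination eC - hc)])]
    exact pauli1_ZZ
  by_cases eD : j = i + d + 2
  · rw [if_neg e0,
      if_neg (show ¬(j = i + d - 1 ∨ j = i + d ∨ j = i + d + 1) by
        rintro (hc | hc | hc)
        exacts [f3 (by linear_combination hc - eD), f2 (by linear_combination hc - eD),
          f1 (by linear_combination hc - eD)]),
      if_neg e1, if_pos (Or.inr (Or.inr (show j = i + 1 + d + 1 by linear_combination eD))),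
      if_neg nS1, if_pos (Or.inr eD), pauli1_zero, one_mul]
  · rw [if_neg e0,
      if_neg (show ¬(j = i + d - 1 ∨ j = i + d ∨ j = i + d + 1) by
        rintro (hc | hc | hc); exacts [eA hc, eB hc, eC hc]),
      if_neg e1,
      if_neg (show ¬(j = i + 1 + d - 1 ∨ j = i + 1 + d ∨ j = i + 1 + d + 1) by
        rintro (hc | hc | hc)
        exacts [eB (by linear_combination hc), eC (by linear_combination hc),
          eD (by linear_combination hc)]),
      if_neg nS1,
      if_neg (show ¬(j = i + d - 1 ∨ j = i + d + 2) by
        rintro (hc | hc); exacts [eA hc, eD hc]),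
      pauli1_zero, one_mul]

lemma key2 {N : ℕ}
    (g1 : ((N / 2 : ℕ) : ZMod N) ≠ 1) (g2 : ((N / 2 : ℕ) : ZMod N) ≠ 2)
    (g1' : ((N / 2 : ℕ) : ZMod N) + 1 ≠ 0) (g2' : ((N / 2 : ℕ) : ZMod N) + 2 ≠ 0)
    (i j : ZMod N) :
    pauli1 (zpairLabel N i j) * pauli1 (sLabel N i j) = pauli1 (xxLabel N i j) := by
  unfold zpairLabel sLabel xxLabel
  set d := ((N / 2 : ℕ) : ZMod N) with hd
  by_cases e0 : j = i
  · rw [if_neg (show ¬(j = i + d - 1 ∨ j = i + d + 2) by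
        rintro (hc | hc)
        exacts [g1 (by linear_combination e0 - hc), g2' (by linear_combination e0 - hc)]),
      if_pos (Or.inl e0), pauli1_zero, one_mul]
  by_cases e1 : j = i + 1
  · rw [if_neg (show ¬(j = i + d - 1 ∨ j = i + d + 2) by
        rintro (hc | hc)
        exacts [g2 (by linear_combination e1 - hc), g1' (by linear_combination e1 - hc)]),
      if_pos (Or.inr e1), pauli1_zero, one_mul]
  have nS1 : ¬(j = i ∨ j = i + 1) := fun hc => hc.elim e0 e1
  by_cases eA : j = i + d - 1
  · rw [if_pos (Or.inl eA), if_neg nS1, if_neg nS1]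
    exact pauli1_ZZ
  by_cases eD : j = i + d + 2
  · rw [if_pos (Or.inr eD), if_neg nS1, if_neg nS1]
    exact pauli1_ZZ
  · have nZ : ¬(j = i + d - 1 ∨ j = i + d + 2) := by rintro (hc | hc); exacts [eA hc, eD hc]
    rw [if_neg nZ, if_neg nS1, pauli1_zero, one_mul]


lemma pauli1_XX : pauli1 1 * pauli1 1 = pauli1 0 := by
  ext a b; fin_cases a <;> fin_cases b <;>
    simp [pauli1, Matrix.mul_apply, Fin.sum_univ_two, Matrix.one_apply]

lemma zmod_cast_ne {N : ℕ} [NeZero N] {a b : ℕ} (ha : a < N) (hb : b < N) (hab : a ≠ b) :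
    (a : ZMod N) ≠ (b : ZMod N) := fun h =>
  hab (by rw [← ZMod.val_cast_of_lt ha, ← ZMod.val_cast_of_lt hb, h])

lemma pauliOp_mul_pauliOp {V : Type*} [Fintype V] [DecidableEq V] (p q r : V → Fin 4)
    (h : ∀ i, pauli1 (p i) * pauli1 (q i) = pauli1 (r i)) :
    pauliOp p * pauliOp q = pauliOp r := by
  ext x y
  show (∑ z : V → Fin 2, (∏ i, pauli1 (p i) (x i) (z i)) * ∏ i, pauli1 (q i) (z i) (y i))
      = ∏ i, pauli1 (r i) (x i) (y i)
  have key : ∀ i : V, pauli1 (r i) (x i) (y i)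
      = ∑ k : Fin 2, pauli1 (p i) (x i) k * pauli1 (q i) k (y i) := fun i => by
    rw [← h i, Matrix.mul_apply]
  calc (∑ z : V → Fin 2, (∏ i, pauli1 (p i) (x i) (z i)) * ∏ i, pauli1 (q i) (z i) (y i))
      = ∑ z : V → Fin 2, ∏ i, (pauli1 (p i) (x i) (z i) * pauli1 (q i) (z i) (y i)) := by
        simp_rw [Finset.prod_mul_distrib]
    _ = ∏ i, ∑ k : Fin 2, pauli1 (p i) (x i) k * pauli1 (q i) k (y i) := by
        rw [Finset.prod_univ_sum, Fintype.piFinset_univ]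
    _ = ∏ i, pauli1 (r i) (x i) (y i) := by simp_rw [key]

lemma sum_mulVec' {V ι : Type*} [Fintype V] [DecidableEq V] (s : Finset ι)
    (M : ι → QOp V) (v : (V → Fin 2) → ℂ) :
    (∑ i ∈ s, M i).mulVec v = ∑ i ∈ s, (M i).mulVec v := by
  ext x
  simp only [Matrix.mulVec, dotProduct, Finset.sum_apply, Matrix.sum_apply,
    Finset.sum_mul]
  exact Finset.sum_comm


/-- the graph state of `G₁` (the common `+1`-eigenstate `ψ` of all `K_v`)
is stabilized by each `σˣ_i σˣ_{i+1} σᶻ_{i+N/2-1} σᶻ_{i+N/2+2}`, hence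
`(σᶻ_{i+N/2-1} σᶻ_{i+N/2+2} - σˣ_i σˣ_{i+1}) ψ = 0`, and summing over `i`,
`Ĥ ψ = 0` for `Ĥ = J Σ_i (σᶻ_i σᶻ_{i+3} - σˣ_i σˣ_{i+1})`. -/
theorem stmt19 (N : ℕ) [NeZero N] (hN : 8 ≤ N) (hEven : Even N) (J : ℝ)
    (ψ : (ZMod N → Fin 2) → ℂ)
    (hψ : ∀ v : ZMod N, (pauliOp (Klabel (G1 N) v)).mulVec ψ = ψ) :
    (∀ i : ZMod N, (pauliOp (sLabel N i)).mulVec ψ = ψ) ∧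
    (∀ i : ZMod N, (pauliOp (zpairLabel N i) - pauliOp (xxLabel N i)).mulVec ψ = 0) ∧
    ((J : ℂ) • ∑ i : ZMod N,
      (pauliOp (zzLabel N i) - pauliOp (xxLabel N i))).mulVec ψ = 0 := by
  obtain ⟨m, hm⟩ := hEven
  have hm4 : 4 ≤ m := by omega
  have hNdiv : N / 2 = m := by omega
  have hh : ((N / 2 : ℕ) : ZMod N) + ((N / 2 : ℕ) : ZMod N) = 0 := by
    rw [hNdiv, ← Nat.cast_add, ← hm, ZMod.natCast_self]
  have f1 : (1 : ZMod N) ≠ 0 := by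
    simpa using zmod_cast_ne (N := N) (a := 1) (b := 0) (by omega) (by omega) (by omega)
  have f2 : (2 : ZMod N) ≠ 0 := by
    simpa using zmod_cast_ne (N := N) (a := 2) (b := 0) (by omega) (by omega) (by omega)
  have f3 : (3 : ZMod N) ≠ 0 := by
    simpa using zmod_cast_ne (N := N) (a := 3) (b := 0) (by omega) (by omega) (by omega)
  have g0 : ((N / 2 : ℕ) : ZMod N) ≠ 0 := by
    rw [hNdiv]
    simpa using zmod_cast_ne (N := N) (a := m) (b := 0) (by omega) (by omega) (by omega)
  have g1 : ((N / 2 : ℕ) : ZMod N) ≠ 1 := by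
    rw [hNdiv]
    simpa using zmod_cast_ne (N := N) (a := m) (b := 1) (by omega) (by omega) (by omega)
  have g2 : ((N / 2 : ℕ) : ZMod N) ≠ 2 := by
    rw [hNdiv]
    simpa using zmod_cast_ne (N := N) (a := m) (b := 2) (by omega) (by omega) (by omega)
  have g1' : ((N / 2 : ℕ) : ZMod N) + 1 ≠ 0 := by
    rw [hNdiv]
    have := zmod_cast_ne (N := N) (a := m + 1) (b := 0) (by omega) (by omega) (by omega)
    push_cast at this
    simpa using this
  have g2' : ((N / 2 : ℕ) : ZMod N) + 2 ≠ 0 := by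
    rw [hNdiv]
    have := zmod_cast_ne (N := N) (a := m + 2) (b := 0) (by omega) (by omega) (by omega)
    push_cast at this
    simpa using this
  have hs : ∀ i : ZMod N, (pauliOp (sLabel N i)).mulVec ψ = ψ := by
    intro i
    have hKK : pauliOp (Klabel (G1 N) i) * pauliOp (Klabel (G1 N) (i + 1))
        = pauliOp (sLabel N i) :=
      pauliOp_mul_pauliOp _ _ _ (key1 hh f1 f2 f3 g0 g1 g2 g1' g2' i)
    rw [← hKK, ← Matrix.mulVec_mulVec, hψ (i + 1), hψ i]
  have hzx : ∀ i : ZMod N,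
      (pauliOp (zpairLabel N i)).mulVec ψ = (pauliOp (xxLabel N i)).mulVec ψ := by
    intro i
    have hZS : pauliOp (zpairLabel N i) * pauliOp (sLabel N i) = pauliOp (xxLabel N i) :=
      pauliOp_mul_pauliOp _ _ _ (key2 g1 g2 g1' g2' i)
    calc (pauliOp (zpairLabel N i)).mulVec ψ
        = (pauliOp (zpairLabel N i)).mulVec ((pauliOp (sLabel N i)).mulVec ψ) := by rw [hs i]
      _ = (pauliOp (zpairLabel N i) * pauliOp (sLabel N i)).mulVec ψ :=
          Matrix.mulVec_mulVec ψ _ _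
      _ = (pauliOp (xxLabel N i)).mulVec ψ := by rw [hZS]
  refine ⟨hs, fun i => by rw [Matrix.sub_mulVec, hzx i, sub_self], ?_⟩
  have hlabel : ∀ i : ZMod N,
      zzLabel N i = zpairLabel N (i + (1 - ((N / 2 : ℕ) : ZMod N))) := by
    intro i
    funext j
    simp only [zzLabel, zpairLabel]
    rw [show i + (1 - ((N / 2 : ℕ) : ZMod N)) + ((N / 2 : ℕ) : ZMod N) - 1 = i from by ring,
      show i + (1 - ((N / 2 : ℕ) : ZMod N)) + ((N / 2 : ℕ) : ZMod N) + 2 = i + 3 from by ring]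
  have hsum : ∑ i : ZMod N, pauliOp (zzLabel N i) = ∑ i : ZMod N, pauliOp (zpairLabel N i) := by
    refine Fintype.sum_equiv (Equiv.addRight (1 - ((N / 2 : ℕ) : ZMod N))) _ _ fun i => ?_
    rw [hlabel i]
    rfl
  rw [Matrix.smul_mulVec, sum_mulVec']
  have hz : ∑ i : ZMod N, (pauliOp (zzLabel N i) - pauliOp (xxLabel N i)).mulVec ψ = 0 := by
    simp_rw [Matrix.sub_mulVec]
    rw [Finset.sum_sub_distrib,
      ← sum_mulVec' Finset.univ (fun i => pauliOp (zzLabel N i)) ψ, hsum,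
      sum_mulVec' Finset.univ (fun i => pauliOp (zpairLabel N i)) ψ,
      Finset.sum_congr rfl fun i _ => hzx i, sub_self]
  rw [hz, smul_zero]
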